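/- arXiv:2302.01915 — 4 statements merged into one kernel-verified Lean document; each statement's English description precedes it below -/
import Mathlib

section
/- (Dudley entropy integral variant.) Let (X, ρ) be a metric space, M > 0, and let F be a family of functions X → [−M, M] with 0 ∈ F and F = −F. Let ξ₁,…,ξ_m be independent random variables each taking values in {−1, 1} with equal probability, and let x₁,…,x_m ∈ X. Then E_ξ sup_{f ∈ F} |(1/m) Σ_{i=1}^m ξ_i f(x_i)| ≤ inf_{α > 0} ( 4α + (12/√m) ∫_α^M √( ln N(F, δ, ‖·‖_∞) ) dδ ). -/
open MeasureTheory
open scoped ENNReal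

noncomputable section

/-- Covering number (with centers inside `S`) with respect to a closeness
relation: the minimal cardinality (in `ℕ∞`) of a finite subset `T ⊆ S` such
that every element of `S` is close to some element of `T`. -/
def covN {A : Type*} (close : A → A → Prop) (S : Set A) : ℕ∞ :=
  sInf {n : ℕ∞ | ∃ T : Finset A, ↑T ⊆ S ∧ (T.card : ℕ∞) = n ∧
    ∀ a ∈ S, ∃ t ∈ T, close a t}

open Classical in
/-- `√(ln N)` as an extended nonnegative real, with value `⊤` when the
covering number is infinite. -/
def entropyOf (N : ℕ∞) : ℝ≥0∞ :=
  if N = ⊤ then ⊤ else ENNReal.ofReal (Real.sqrt (Real.log N.toNat))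


lemma exp_avg_le {Ω : Type*} [Fintype Ω] [Nonempty Ω] (g : Ω → ℝ) :
    Real.exp ((Fintype.card Ω : ℝ)⁻¹ * ∑ ξ, g ξ) ≤
      (Fintype.card Ω : ℝ)⁻¹ * ∑ ξ, Real.exp (g ξ) := by
  have hcard : (0:ℝ) < (Fintype.card Ω : ℝ) := by
    exact_mod_cast Fintype.card_pos
  have h := convexOn_exp.map_sum_le (t := Finset.univ) (w := fun _ : Ω => (Fintype.card Ω : ℝ)⁻¹)
    (p := g) (fun i _ => by positivity)
    (by simp [Finset.sum_const, mul_inv_cancel₀ hcard.ne'])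
    (fun i _ => Set.mem_univ _)
  simpa [smul_eq_mul, Finset.mul_sum] using h

lemma avg_exp_rad {m : ℕ} (w : Fin m → ℝ) :
    ∑ ξ : Fin m → Bool, Real.exp (∑ i, (if ξ i then (1:ℝ) else -1) * w i) ≤
      2^m * Real.exp (∑ i, (w i)^2 / 2) := by
  classical
  have h1 : ∑ ξ : Fin m → Bool, Real.exp (∑ i, (if ξ i then (1:ℝ) else -1) * w i)
      = ∏ i, (Real.exp (w i) + Real.exp (-w i)) := by
    have := (Fintype.prod_sum (fun i (b : Bool) => Real.exp ((if b then (1:ℝ) else -1) * w i))).symm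
    simp only [Real.exp_sum]
    rw [this]
    simp [Fintype.sum_bool]
  rw [h1]
  have h2 : ∀ i : Fin m, Real.exp (w i) + Real.exp (-w i) ≤ 2 * Real.exp ((w i)^2/2) := by
    intro i
    have := Real.cosh_le_exp_half_sq (w i)
    rw [Real.cosh_eq] at this
    linarith
  calc ∏ i, (Real.exp (w i) + Real.exp (-w i)) ≤ ∏ i, 2 * Real.exp ((w i)^2/2) := by
        apply Finset.prod_le_prod
        · intro i _; positivity
        · intro i _; exact h2 i
    _ = 2^m * Real.exp (∑ i, (w i)^2 / 2) := by
        rw [Finset.prod_mul_distrib, ← Real.exp_sum]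
        simp



lemma bound_of_mgf {A L R : ℝ} (hL : 0 ≤ L) (hR : 0 ≤ R)
    (key : ∀ lam : ℝ, 0 < lam → A ≤ L / lam + lam * R^2 / 2) :
    A ≤ R * Real.sqrt (2 * L) := by
  have hmain : ∀ ε : ℝ, 0 < ε → A ≤ R * Real.sqrt (2 * L) + ε := by
    intro ε hε
    by_cases hR0 : R = 0
    · have hlam : 0 < (L + 1)/ε := by positivity
      have := key _ hlam
      rw [hR0] at this
      have h2 : L / ((L+1)/ε) ≤ ε := by
        rw [div_div_eq_mul_div, div_le_iff₀ (by linarith)]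
        nlinarith
      have hsq : 0 ≤ Real.sqrt (2*L) := Real.sqrt_nonneg _
      calc A ≤ L / ((L+1)/ε) + ((L+1)/ε) * 0^2/2 := this
        _ ≤ ε := by simpa using h2
        _ ≤ R * Real.sqrt (2*L) + ε := by rw [hR0]; simp
    · have hRpos : 0 < R := lt_of_le_of_ne hR (Ne.symm hR0)
      by_cases hL0 : L = 0
      · have hlam : 0 < 2*ε/R^2 := by positivity
        have := key _ hlam
        rw [hL0] at this
        have : A ≤ ε := by
          calc A ≤ 0/(2*ε/R^2) + (2*ε/R^2)*R^2/2 := this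
            _ = ε := by field_simp; ring
        refine this.trans ?_
        have : 0 ≤ R * Real.sqrt (2*L) := by positivity
        linarith
      · have hLpos : 0 < L := lt_of_le_of_ne hL (Ne.symm hL0)
        have hsq : 0 < Real.sqrt (2*L) := Real.sqrt_pos.2 (by linarith)
        have hsqsq : (Real.sqrt (2*L))^2 = 2*L := Real.sq_sqrt (by linarith)
        have hlam : 0 < Real.sqrt (2*L)/R := by positivity
        have := key _ hlam
        refine this.trans ?_
        have heq : L / (Real.sqrt (2*L)/R) + (Real.sqrt (2*L)/R) * R^2/2
            = R * Real.sqrt (2*L) := by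
          have h1 : L / (Real.sqrt (2*L)/R) = L * R / Real.sqrt (2*L) := by
            rw [div_div_eq_mul_div]
          have h2 : L * R / Real.sqrt (2*L) = Real.sqrt (2*L) * R / 2 := by
            rw [div_eq_div_iff hsq.ne' (by norm_num : (2:ℝ) ≠ 0)]
            nlinarith [hsqsq]
          rw [h1, h2]
          field_simp
          ring
        rw [heq]
        linarith [hε]
  by_contra hcon
  push_neg at hcon
  have := hmain ((A - R * Real.sqrt (2*L))/2) (by linarith)
  linarith

lemma massart {m : ℕ} {β : Type*} (s : Finset β) (hs : s.Nonempty)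
    (v : β → Fin m → ℝ) (R : ℝ) (hR : 0 ≤ R) (hv : ∀ b ∈ s, ∑ i, (v b i)^2 ≤ R^2) :
    (2^m : ℝ)⁻¹ * ∑ ξ : Fin m → Bool,
        s.sup' hs (fun b => ∑ i, (if ξ i then (1:ℝ) else -1) * v b i)
      ≤ R * Real.sqrt (2 * Real.log s.card) := by
  classical
  set f : (Fin m → Bool) → β → ℝ :=
    fun ξ b => ∑ i, (if ξ i then (1:ℝ) else -1) * v b i with hf
  set g : (Fin m → Bool) → ℝ := fun ξ => s.sup' hs (f ξ) with hg
  show (2^m : ℝ)⁻¹ * ∑ ξ : Fin m → Bool, g ξ ≤ R * Real.sqrt (2 * Real.log s.card)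
  set A := (2^m : ℝ)⁻¹ * ∑ ξ : Fin m → Bool, g ξ with hA
  set L := Real.log (s.card : ℝ) with hL
  have hcard1 : (1:ℝ) ≤ (s.card : ℝ) := by exact_mod_cast hs.card_pos
  have hLnn : 0 ≤ L := Real.log_nonneg hcard1
  have h2m : (0:ℝ) < 2^m := by positivity
  refine bound_of_mgf hLnn hR ?_
  intro lam hlam
  have hexp : Real.exp (lam * A) ≤ (s.card : ℝ) * Real.exp (lam^2 * R^2 / 2) := by
    have j1 : Real.exp (lam * A) ≤ (2^m : ℝ)⁻¹ * ∑ ξ : Fin m → Bool,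
        Real.exp (lam * g ξ) := by
      have h0 := exp_avg_le (Ω := Fin m → Bool) (fun ξ => lam * g ξ)
      have hc : ((Fintype.card (Fin m → Bool) : ℝ)) = 2^m := by
        simp [Fintype.card_fun]
      rw [hc] at h0
      refine le_trans (le_of_eq ?_) h0
      congr 1
      rw [hA, ← Finset.mul_sum]
      ring
    have j2 : ∀ ξ : Fin m → Bool,
        Real.exp (lam * g ξ) ≤ ∑ b ∈ s, Real.exp (lam * f ξ b) := by
      intro ξ
      obtain ⟨b0, hb0, hb0e⟩ := Finset.exists_mem_eq_sup' hs (f ξ)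
      have hgb : g ξ = f ξ b0 := hb0e
      rw [hgb]
      exact Finset.single_le_sum (f := fun b => Real.exp (lam * f ξ b))
        (fun b _ => (Real.exp_pos _).le) hb0
    have j3 : ∀ b ∈ s, ∑ ξ : Fin m → Bool, Real.exp (lam * f ξ b) ≤
        2^m * Real.exp (lam^2 * R^2/2) := by
      intro b hb
      have he : ∀ ξ : Fin m → Bool, lam * f ξ b = ∑ i, (if ξ i then (1:ℝ) else -1) * (lam * v b i) := by
        intro ξ
        rw [hf]
        simp only []
        rw [Finset.mul_sum]
        apply Finset.sum_congr rfl
        intro i _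
        ring
      calc ∑ ξ : Fin m → Bool, Real.exp (lam * f ξ b)
          = ∑ ξ : Fin m → Bool, Real.exp (∑ i, (if ξ i then (1:ℝ) else -1) * (lam * v b i)) := by
            apply Finset.sum_congr rfl
            intro ξ _
            rw [he ξ]
        _ ≤ 2^m * Real.exp (∑ i, (lam * v b i)^2 / 2) := avg_exp_rad _
        _ ≤ 2^m * Real.exp (lam^2 * R^2/2) := by
            apply mul_le_mul_of_nonneg_left _ h2m.le
            apply Real.exp_le_exp.2
            have h5 : ∑ i, (lam * v b i)^2 / 2 = lam^2 * (∑ i, (v b i)^2) / 2 := by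
              rw [Finset.mul_sum, Finset.sum_div]
              apply Finset.sum_congr rfl
              intro i _
              ring
            rw [h5]
            have := hv b hb
            nlinarith [sq_nonneg lam]
    calc Real.exp (lam * A)
        ≤ (2^m : ℝ)⁻¹ * ∑ ξ : Fin m → Bool, ∑ b ∈ s, Real.exp (lam * f ξ b) := by
          refine j1.trans ?_
          apply mul_le_mul_of_nonneg_left _ (inv_nonneg.2 h2m.le)
          exact Finset.sum_le_sum (fun ξ _ => j2 ξ)
      _ = (2^m : ℝ)⁻¹ * ∑ b ∈ s, ∑ ξ : Fin m → Bool, Real.exp (lam * f ξ b) := by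
          rw [Finset.sum_comm]
      _ ≤ (2^m : ℝ)⁻¹ * ∑ b ∈ s, 2^m * Real.exp (lam^2 * R^2/2) := by
          apply mul_le_mul_of_nonneg_left _ (inv_nonneg.2 h2m.le)
          exact Finset.sum_le_sum j3
      _ = (s.card : ℝ) * Real.exp (lam^2 * R^2 / 2) := by
          rw [Finset.sum_const, nsmul_eq_mul]
          field_simp
  have hlog := Real.log_le_log (Real.exp_pos _) hexp
  rw [Real.log_exp] at hlog
  have hcl : Real.log ((s.card : ℝ) * Real.exp (lam^2 * R^2/2)) = L + lam^2 * R^2/2 := by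
    rw [Real.log_mul (by linarith) (Real.exp_pos _).ne', Real.log_exp]
  rw [hcl] at hlog
  have hdiv : (L + lam^2 * R^2/2) / lam = L/lam + lam * R^2/2 := by
    field_simp
  have hfin : A ≤ (L + lam^2 * R^2/2) / lam := by
    rw [le_div_iff₀ hlam]
    linarith [hlog]
  rw [hdiv] at hfin
  exact hfin

lemma covN_mono {A : Type*} {c c' : A → A → Prop} (h : ∀ a b, c a b → c' a b) (S : Set A) :
    covN c' S ≤ covN c S := by
  apply sInf_le_sInf
  rintro n ⟨T, h1, h2, h3⟩
  exact ⟨T, h1, h2, fun a ha => by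
    obtain ⟨t, ht, hc⟩ := h3 a ha
    exact ⟨t, ht, h a t hc⟩⟩

lemma covN_exists {A : Type*} {c : A → A → Prop} {S : Set A} (h : covN c S ≠ ⊤) :
    ∃ T : Finset A, ↑T ⊆ S ∧ (T.card : ℕ∞) = covN c S ∧ ∀ a ∈ S, ∃ t ∈ T, c a t := by
  have hne : {n : ℕ∞ | ∃ T : Finset A, ↑T ⊆ S ∧ (T.card : ℕ∞) = n ∧
      ∀ a ∈ S, ∃ t ∈ T, c a t}.Nonempty := by
    by_contra hc
    rw [Set.not_nonempty_iff_eq_empty] at hc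
    apply h
    rw [covN, hc, sInf_empty]
  have := csInf_mem hne
  obtain ⟨T, h1, h2, h3⟩ := this
  exact ⟨T, h1, h2, h3⟩

set_option maxHeartbeats 3000000

/-- **Lemma A.3 (a variant of Dudley's entropy integral).** Let `F` be a family
of functions `X → [−M, M]` with `0 ∈ F` and `F = −F`, and let `x₁,…,x_m ∈ X`.
Then the Rademacher average `E_ξ sup_{f ∈ F} |(1/m) ∑ ξ_i f(x_i)|` is at most
`inf_{α>0} (4α + (12/√m) ∫_α^M √(ln N(F, δ, ‖·‖_∞)) dδ)`. -/
theorem dudley_entropy_integral_variant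
    {X : Type*} [PseudoMetricSpace X] (M : ℝ) (hM : 0 < M)
    (F : Set (X → ℝ))
    (hrange : ∀ f ∈ F, ∀ x, f x ∈ Set.Icc (-M) M)
    (hzero : (fun _ => (0 : ℝ)) ∈ F)
    (hsymm : ∀ f ∈ F, -f ∈ F)
    (m : ℕ) (x : Fin m → X) :
    ∀ α : ℝ, 0 < α →
      ENNReal.ofReal
          ((2 ^ m : ℝ)⁻¹ * ∑ ξ : Fin m → Bool,
            sSup ((fun f : X → ℝ =>
              |(1 / (m : ℝ)) * ∑ i, (if ξ i then (1 : ℝ) else -1) * f (x i)|) '' F)) ≤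
        ENNReal.ofReal (4 * α) +
          ENNReal.ofReal (12 / Real.sqrt m) *
            ∫⁻ δ in Set.Ioc α M,
              entropyOf (covN (fun f g : X → ℝ => ∀ z, |f z - g z| ≤ δ) F) := by
  classical
  intro α hα
  have hFne : F.Nonempty := ⟨_, hzero⟩
  -- trivial case m = 0
  rcases Nat.eq_zero_or_pos m with hm0 | hmpos
  · subst hm0
    have himg : ∀ ξ : Fin 0 → Bool,
        ((fun f : X → ℝ =>
          |(1 / ((0:ℕ) : ℝ)) * ∑ i : Fin 0, (if ξ i then (1 : ℝ) else -1) * f (x i)|) '' F)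
          = {0} := by
      intro ξ
      apply Set.eq_singleton_iff_nonempty_unique_mem.2
      constructor
      · exact hFne.image _
      · rintro y ⟨f, _, rfl⟩
        simp
    rw [show ((2:ℝ) ^ (0:ℕ))⁻¹ * ∑ ξ : Fin 0 → Bool,
        sSup ((fun f : X → ℝ =>
          |(1 / ((0:ℕ) : ℝ)) * ∑ i : Fin 0, (if ξ i then (1 : ℝ) else -1) * f (x i)|) '' F) = 0
      by
        have h1 : ∀ ξ : Fin 0 → Bool, sSup ((fun f : X → ℝ =>
          |(1 / ((0:ℕ) : ℝ)) * ∑ i : Fin 0, (if ξ i then (1 : ℝ) else -1) * f (x i)|) '' F) = 0 := by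
          intro ξ; rw [himg ξ]; exact csSup_singleton 0
        rw [Finset.sum_eq_zero (fun ξ _ => h1 ξ), mul_zero]]
    simp
  -- now m ≥ 1
  have hm1 : (1:ℝ) ≤ (m:ℝ) := by exact_mod_cast hmpos
  have hmpos' : (0:ℝ) < (m:ℝ) := by linarith
  have h2m : (0:ℝ) < 2^m := by positivity
  have habs : ∀ (ξ : Fin m → Bool) (f : X → ℝ), f ∈ F →
      |(1 / (m : ℝ)) * ∑ i, (if ξ i then (1 : ℝ) else -1) * f (x i)| ≤ M := by
    intro ξ f hf
    rw [abs_mul, abs_of_nonneg (by positivity : (0:ℝ) ≤ 1/(m:ℝ))]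
    have h1 : |∑ i, (if ξ i then (1 : ℝ) else -1) * f (x i)| ≤ (m:ℝ) * M := by
      refine (Finset.abs_sum_le_sum_abs _ _).trans ?_
      have : ∀ i : Fin m, |(if ξ i then (1 : ℝ) else -1) * f (x i)| ≤ M := by
        intro i
        rw [abs_mul]
        have h2 : |(if ξ i then (1 : ℝ) else -1)| = 1 := by
          by_cases h : ξ i <;> simp [h]
        rw [h2, one_mul, abs_le]
        have := hrange f hf (x i)
        exact ⟨this.1, this.2⟩
      refine (Finset.sum_le_sum (fun i _ => this i)).trans ?_
      rw [Finset.sum_const, Finset.card_univ, Fintype.card_fin, nsmul_eq_mul]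
    calc (1/(m:ℝ)) * |∑ i, (if ξ i then (1 : ℝ) else -1) * f (x i)|
        ≤ (1/(m:ℝ)) * ((m:ℝ) * M) := by
          apply mul_le_mul_of_nonneg_left h1 (by positivity)
      _ = M := by field_simp
  have hsupM : ∀ ξ : Fin m → Bool,
      sSup ((fun f : X → ℝ =>
        |(1 / (m : ℝ)) * ∑ i, (if ξ i then (1 : ℝ) else -1) * f (x i)|) '' F) ≤ M := by
    intro ξ
    apply csSup_le (hFne.image _)
    rintro y ⟨f, hf, rfl⟩
    exact habs ξ f hf
  by_cases hMα : M ≤ 4*α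
  · refine le_trans ?_ le_self_add
    apply ENNReal.ofReal_le_ofReal
    calc (2^m : ℝ)⁻¹ * ∑ ξ : Fin m → Bool,
        sSup ((fun f : X → ℝ =>
          |(1 / (m : ℝ)) * ∑ i, (if ξ i then (1 : ℝ) else -1) * f (x i)|) '' F)
        ≤ (2^m : ℝ)⁻¹ * ∑ _ξ : Fin m → Bool, M := by
          apply mul_le_mul_of_nonneg_left _ (by positivity)
          exact Finset.sum_le_sum (fun ξ _ => hsupM ξ)
      _ = M := by
          rw [Finset.sum_const, Finset.card_univ, nsmul_eq_mul]
          have hc : (Fintype.card (Fin m → Bool) : ℝ) = 2^m := by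
            simp [Fintype.card_fun]
          rw [hc]
          field_simp
      _ ≤ 4*α := hMα
  push_neg at hMα
  by_cases hbad : ∃ δ, α < δ ∧ δ < M ∧ covN (fun f g : X → ℝ => ∀ z, |f z - g z| ≤ δ) F = ⊤
  · obtain ⟨δ₀, hδ₀1, hδ₀2, hδ₀3⟩ := hbad
    have hpt : ∀ δ' ∈ Set.Ioc α δ₀,
        entropyOf (covN (fun f g : X → ℝ => ∀ z, |f z - g z| ≤ δ') F) = ⊤ := by
      intro δ' hδ'
      have hmono := covN_mono (c := fun f g : X → ℝ => ∀ z, |f z - g z| ≤ δ')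
        (c' := fun f g : X → ℝ => ∀ z, |f z - g z| ≤ δ₀)
        (fun f g hc z => (hc z).trans hδ'.2) F
      rw [hδ₀3] at hmono
      rw [top_le_iff] at hmono
      rw [hmono]
      simp [entropyOf]
    have hIoc : ∫⁻ δ' in Set.Ioc α δ₀,
        entropyOf (covN (fun f g : X → ℝ => ∀ z, |f z - g z| ≤ δ') F) = ⊤ := by
      have h1 : ∫⁻ δ' in Set.Ioc α δ₀, (⊤ : ℝ≥0∞) ≤ ∫⁻ δ' in Set.Ioc α δ₀,
          entropyOf (covN (fun f g : X → ℝ => ∀ z, |f z - g z| ≤ δ') F) :=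
        setLIntegral_mono' measurableSet_Ioc (fun δ' hδ' => (hpt δ' hδ').ge)
      rw [setLIntegral_const] at h1
      have h2 : (volume (Set.Ioc α δ₀)) ≠ 0 := by
        rw [Real.volume_Ioc]
        simp only [ne_eq, ENNReal.ofReal_eq_zero, not_le]
        linarith
      rw [ENNReal.top_mul h2] at h1
      exact top_le_iff.1 h1
    have hint : ∫⁻ δ' in Set.Ioc α M,
        entropyOf (covN (fun f g : X → ℝ => ∀ z, |f z - g z| ≤ δ') F) = ⊤ := by
      refine top_le_iff.1 ?_
      rw [← hIoc]
      exact lintegral_mono_set (Set.Ioc_subset_Ioc_right hδ₀2.le)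
    rw [hint]
    have hcoef : ENNReal.ofReal (12 / Real.sqrt m) ≠ 0 := by
      simp only [ne_eq, ENNReal.ofReal_eq_zero, not_le]
      have : (0:ℝ) < Real.sqrt m := Real.sqrt_pos.2 hmpos'
      positivity
    rw [ENNReal.mul_top hcoef]
    exact le_top.trans (le_add_self)
  push_neg at hbad
  have hα4 : (0:ℝ) < 4*α := by linarith
  obtain ⟨L0, hL0⟩ : ∃ n : ℕ, M < 4*α*2^n := by
    obtain ⟨n, hn⟩ := pow_unbounded_of_one_lt (M/(4*α)) (one_lt_two (α := ℝ))
    exact ⟨n, by rwa [div_lt_iff₀ hα4, mul_comm] at hn⟩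
  have hexL : ∃ n : ℕ, M ≤ 4*α*2^n := ⟨L0, hL0.le⟩
  set L := Nat.find hexL with hLdef
  have hPL : M ≤ 4*α*2^L := Nat.find_spec hexL
  have hnot : ∀ j, j < L → 4*α*2^j < M := by
    intro j hj
    have := Nat.find_min hexL hj
    push_neg at this
    exact this
  have hL1 : 1 ≤ L := by
    rcases Nat.eq_zero_or_pos L with h | h
    · exfalso
      have := hPL
      rw [h] at this
      simp at this
      linarith
    · exact h
  set sc : ℕ → ℝ := fun j => 4*α*2^j with hscdef
  have hscpos : ∀ j, 0 < sc j := by intro j; positivity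
  have hscα : ∀ j, α < sc j := by
    intro j
    have h1 : (1:ℝ) ≤ 2^j := one_le_pow₀ (by norm_num)
    have : 4*α ≤ sc j := by
      show (4:ℝ)*α ≤ 4*α*2^j
      nlinarith
    linarith
  have hsc2 : ∀ j, sc (j+1) = 2 * sc j := by
    intro j
    show (4:ℝ)*α*2^(j+1) = 2 * (4*α*2^j)
    rw [pow_succ]
    ring
  have hscmono : ∀ j k, j ≤ k → sc j ≤ sc k := by
    intro j k hjk
    show (4:ℝ)*α*2^j ≤ 4*α*2^k
    have : (2:ℝ)^j ≤ 2^k := pow_le_pow_right₀ (by norm_num) hjk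
    nlinarith
  have hscM : ∀ j, L ≤ j → M ≤ sc j := fun j hj => hPL.trans (hscmono L j hj)
  have hex : ∀ j : ℕ, ∃ T : Finset (X → ℝ), ↑T ⊆ F ∧
      (∀ f ∈ F, ∃ t ∈ T, ∀ z, |f z - t z| ≤ sc j) ∧
      (j < L → (T.card : ℕ∞) = covN (fun f g : X → ℝ => ∀ z, |f z - g z| ≤ sc j) F) ∧
      (L ≤ j → T = {fun _ => (0:ℝ)}) := by
    intro j
    by_cases hj : j < L
    · have hne : covN (fun f g : X → ℝ => ∀ z, |f z - g z| ≤ sc j) F ≠ ⊤ :=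
        hbad (sc j) (hscα j) (hnot j hj)
      obtain ⟨T, h1, h2, h3⟩ := covN_exists hne
      exact ⟨T, h1, h3, fun _ => h2, fun h => absurd hj (by omega)⟩
    · refine ⟨{fun _ => (0:ℝ)}, ?_, ?_, fun h => absurd h hj, fun _ => rfl⟩
      · intro f hf
        rw [Finset.coe_singleton, Set.mem_singleton_iff] at hf
        rw [hf]
        exact hzero
      · intro f hf
        refine ⟨fun _ => (0:ℝ), Finset.mem_singleton_self _, fun z => ?_⟩
        have := hrange f hf z
        rw [sub_zero]
        rw [abs_le]
        have hMsc : M ≤ sc j := hscM j (by omega)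
        exact ⟨by linarith [this.1], by linarith [this.2]⟩
  choose T hT1 hT2 hT3 hT4 using hex
  set N : ℕ → ℕ := fun j => (T j).card with hNdef
  have hTne : ∀ j, (T j).Nonempty := by
    intro j
    obtain ⟨t, ht, _⟩ := hT2 j _ hzero
    exact ⟨t, ht⟩
  have hN1 : ∀ j, 1 ≤ N j := fun j => Finset.card_pos.2 (hTne j)
  have hNmono : ∀ j, j + 1 ≤ L → N (j+1) ≤ N j := by
    intro j hj
    by_cases h : j + 1 < L
    · have e1 := hT3 (j+1) h
      have e2 := hT3 j (by omega)
      have hcov : covN (fun f g : X → ℝ => ∀ z, |f z - g z| ≤ sc (j+1)) F ≤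
          covN (fun f g : X → ℝ => ∀ z, |f z - g z| ≤ sc j) F := by
        apply covN_mono
        intro a b hab z
        exact (hab z).trans (hscmono j (j+1) (by omega))
      rw [← e1, ← e2] at hcov
      exact_mod_cast hcov
    · have hjL : j + 1 = L := by omega
      have : N (j+1) = 1 := by
        show (T (j+1)).card = 1
        rw [hT4 (j+1) (by omega)]
        simp
      rw [this]
      exact hN1 j
  set Pp : ℕ → Finset ((X → ℝ) × (X → ℝ)) := fun j =>
    ((T j) ×ˢ (T (j+1))).filter (fun pr => ∀ z, |pr.1 z - pr.2 z| ≤ 3 * sc j) with hPpdef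
  have hPmem : ∀ j (pr : (X → ℝ) × (X → ℝ)), pr ∈ Pp j ↔
      (pr.1 ∈ T j ∧ pr.2 ∈ T (j+1)) ∧ ∀ z, |pr.1 z - pr.2 z| ≤ 3 * sc j := by
    intro j pr
    rw [hPpdef]
    simp only [Finset.mem_filter, Finset.mem_product]
  have hzero_net : ∀ j, ∃ t ∈ T j, ∀ z, |t z| ≤ sc j := by
    intro j
    obtain ⟨t, ht, hdt⟩ := hT2 j _ hzero
    refine ⟨t, ht, fun z => ?_⟩
    have := hdt z
    rw [show (fun _ => (0:ℝ)) z - t z = -(t z) by simp, abs_neg] at this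
    exact this
  have hPne : ∀ j, (Pp j).Nonempty := by
    intro j
    obtain ⟨t, ht, hdt⟩ := hzero_net j
    obtain ⟨t', ht', hdt'⟩ := hzero_net (j+1)
    refine ⟨(t, t'), (hPmem j (t, t')).2 ⟨⟨ht, ht'⟩, fun z => ?_⟩⟩
    have h1 := hdt z
    have h2 := hdt' z
    have h3 : |t z - t' z| ≤ |t z| + |t' z| := abs_sub _ _
    have h4 := hsc2 j
    linarith
  have hPcard : ∀ j, j + 1 ≤ L → (Pp j).card ≤ N j * N j := by
    intro j hj
    have h1 : (Pp j).card ≤ ((T j) ×ˢ (T (j+1))).card := by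
      rw [hPpdef]
      exact Finset.card_filter_le _ _
    rw [Finset.card_product] at h1
    exact h1.trans (Nat.mul_le_mul_left _ (hNmono j hj))
  choose p hpmem hpdist using hT2
  have hpL : ∀ f (hf : f ∈ F), p L f hf = fun _ => (0:ℝ) := by
    intro f hf
    have := hpmem L f hf
    rw [hT4 L le_rfl, Finset.mem_singleton] at this
    exact this
  set Gv : (Fin m → Bool) → (X → ℝ) → ℝ :=
    fun ξ f => (1 / (m : ℝ)) * ∑ i, (if ξ i then (1:ℝ) else -1) * f (x i) with hGvdef
  have hGv_le : ∀ (ξ : Fin m → Bool) (w : X → ℝ) (c : ℝ), 0 ≤ c → (∀ z, |w z| ≤ c) →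
      Gv ξ w ≤ c := by
    intro ξ w c hc hw
    show (1 / (m : ℝ)) * ∑ i, (if ξ i then (1:ℝ) else -1) * w (x i) ≤ c
    have h1 : ∑ i, (if ξ i then (1:ℝ) else -1) * w (x i) ≤ (m:ℝ) * c := by
      refine le_trans (le_abs_self _) ((Finset.abs_sum_le_sum_abs _ _).trans ?_)
      have h2 : ∀ i : Fin m, |(if ξ i then (1:ℝ) else -1) * w (x i)| ≤ c := by
        intro i
        rw [abs_mul]
        have h3 : |(if ξ i then (1:ℝ) else -1)| = 1 := by
          by_cases h : ξ i <;> simp [h]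
        rw [h3, one_mul]
        exact hw (x i)
      refine (Finset.sum_le_sum (fun i _ => h2 i)).trans ?_
      rw [Finset.sum_const, Finset.card_univ, Fintype.card_fin, nsmul_eq_mul]
    calc (1 / (m : ℝ)) * ∑ i, (if ξ i then (1:ℝ) else -1) * w (x i)
        ≤ (1/(m:ℝ)) * ((m:ℝ) * c) := by
          apply mul_le_mul_of_nonneg_left h1 (by positivity)
      _ = c := by field_simp
  have hGv_sub : ∀ (ξ : Fin m → Bool) (a b : X → ℝ), Gv ξ (a - b) = Gv ξ a - Gv ξ b := by
    intro ξ a b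
    show (1 / (m : ℝ)) * ∑ i, (if ξ i then (1:ℝ) else -1) * (a - b) (x i) = _
    rw [show ∑ i, (if ξ i then (1:ℝ) else -1) * (a - b) (x i)
        = ∑ i, ((if ξ i then (1:ℝ) else -1) * a (x i) - (if ξ i then (1:ℝ) else -1) * b (x i))
      from Finset.sum_congr rfl (fun i _ => by rw [Pi.sub_apply]; ring)]
    rw [Finset.sum_sub_distrib]
    show _ = (1 / (m : ℝ)) * ∑ i, _ - (1 / (m : ℝ)) * ∑ i, _
    ring
  have hchain : ∀ ξ : Fin m → Bool,
      sSup ((fun f : X → ℝ =>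
        |(1 / (m : ℝ)) * ∑ i, (if ξ i then (1 : ℝ) else -1) * f (x i)|) '' F) ≤
      4*α + ∑ j ∈ Finset.range L, (Pp j).sup' (hPne j)
        (fun pr => (1 / (m : ℝ)) * ∑ i,
          (if ξ i then (1:ℝ) else -1) * (pr.1 (x i) - pr.2 (x i))) := by
    intro ξ
    have key : ∀ g, ∀ hg : g ∈ F, Gv ξ g ≤
        4*α + ∑ j ∈ Finset.range L, (Pp j).sup' (hPne j)
          (fun pr => (1 / (m : ℝ)) * ∑ i,
            (if ξ i then (1:ℝ) else -1) * (pr.1 (x i) - pr.2 (x i))) := by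
      intro g hg
      have htel : Gv ξ g = Gv ξ (g - p 0 g hg) +
          ∑ j ∈ Finset.range L, Gv ξ (p j g hg - p (j+1) g hg) := by
        have h1 : ∀ j, Gv ξ (p j g hg - p (j+1) g hg)
            = Gv ξ (p j g hg) - Gv ξ (p (j+1) g hg) := fun j => hGv_sub ξ _ _
        have hsum : ∑ j ∈ Finset.range L, Gv ξ (p j g hg - p (j+1) g hg)
            = Gv ξ (p 0 g hg) - Gv ξ (p L g hg) := by
          rw [← Finset.sum_range_sub' (fun j => Gv ξ (p j g hg)) L]
          exact Finset.sum_congr rfl (fun j _ => h1 j)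
        have hL0 : Gv ξ (p L g hg) = 0 := by
          rw [hpL g hg]
          show (1 / (m : ℝ)) * ∑ i, (if ξ i then (1:ℝ) else -1) * (0:ℝ) = 0
          simp
        rw [hsum, hGv_sub ξ g (p 0 g hg), hL0]
        ring
      rw [htel]
      have hres : Gv ξ (g - p 0 g hg) ≤ 4*α := by
        have h40 : sc 0 = 4*α := by
          show (4:ℝ)*α*2^0 = 4*α
          simp
        rw [← h40]
        apply hGv_le ξ _ _ (hscpos 0).le
        intro z
        rw [Pi.sub_apply]
        exact hpdist 0 g hg z
      have hinc : ∀ j ∈ Finset.range L, Gv ξ (p j g hg - p (j+1) g hg) ≤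
          (Pp j).sup' (hPne j) (fun pr => (1 / (m : ℝ)) * ∑ i,
            (if ξ i then (1:ℝ) else -1) * (pr.1 (x i) - pr.2 (x i))) := by
        intro j _
        have hmem : (p j g hg, p (j+1) g hg) ∈ Pp j := by
          refine (hPmem j _).2 ⟨⟨hpmem j g hg, hpmem (j+1) g hg⟩, fun z => ?_⟩
          have h1 := hpdist j g hg z
          have h2 := hpdist (j+1) g hg z
          have h3 : |p j g hg z - p (j+1) g hg z| ≤
              |p j g hg z - g z| + |g z - p (j+1) g hg z| := abs_sub_le _ _ _
          have h3' : |p j g hg z - g z| = |g z - p j g hg z| := abs_sub_comm _ _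
          have h4 := hsc2 j
          linarith
        have h5 := Finset.le_sup' (fun pr : (X → ℝ) × (X → ℝ) => (1 / (m : ℝ)) * ∑ i,
            (if ξ i then (1:ℝ) else -1) * (pr.1 (x i) - pr.2 (x i))) hmem
        exact le_trans (le_of_eq rfl) h5
      exact add_le_add hres (Finset.sum_le_sum hinc)
    apply csSup_le (hFne.image _)
    rintro y ⟨f, hf, rfl⟩
    simp only []
    have h1 : Gv ξ f ≤ _ := key f hf
    have h2 : Gv ξ (-f) ≤ _ := key (-f) (hsymm f hf)
    have h3 : Gv ξ (-f) = - Gv ξ f := by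
      have := hGv_sub ξ 0 f
      rw [zero_sub] at this
      rw [this]
      have h0 : Gv ξ 0 = 0 := by
        show (1 / (m : ℝ)) * ∑ i, (if ξ i then (1:ℝ) else -1) * (0 : X → ℝ) (x i) = 0
        simp
      rw [h0, zero_sub]
    rw [h3] at h2
    show |Gv ξ f| ≤ _
    rw [abs_le]
    constructor
    · linarith
    · exact h1
  have hsqm : (0:ℝ) < Real.sqrt m := Real.sqrt_pos.2 hmpos'
  have hsqmsq : (Real.sqrt m)^2 = (m:ℝ) := Real.sq_sqrt hmpos'.le
  have hmass : ∀ j, j < L →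
      (2^m : ℝ)⁻¹ * ∑ ξ : Fin m → Bool, (Pp j).sup' (hPne j)
        (fun pr => (1 / (m : ℝ)) * ∑ i,
          (if ξ i then (1:ℝ) else -1) * (pr.1 (x i) - pr.2 (x i))) ≤
      6 * sc j * Real.sqrt (Real.log (N j)) / Real.sqrt m := by
    intro j hj
    set v : (X → ℝ) × (X → ℝ) → Fin m → ℝ :=
      fun pr i => (1 / (m : ℝ)) * (pr.1 (x i) - pr.2 (x i)) with hvdef
    set R : ℝ := 3 * sc j / Real.sqrt m with hRdef
    have hR : 0 ≤ R := by positivity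
    have hfun : ∀ ξ : Fin m → Bool, ∀ pr : (X → ℝ) × (X → ℝ),
        (1 / (m : ℝ)) * ∑ i, (if ξ i then (1:ℝ) else -1) * (pr.1 (x i) - pr.2 (x i))
          = ∑ i, (if ξ i then (1:ℝ) else -1) * v pr i := by
      intro ξ pr
      rw [Finset.mul_sum]
      refine Finset.sum_congr rfl (fun i _ => ?_)
      show (1 / (m : ℝ)) * ((if ξ i then (1:ℝ) else -1) * (pr.1 (x i) - pr.2 (x i))) = _
      ring
    have hsup_eq : ∀ ξ : Fin m → Bool,
        (Pp j).sup' (hPne j) (fun pr => (1 / (m : ℝ)) * ∑ i,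
          (if ξ i then (1:ℝ) else -1) * (pr.1 (x i) - pr.2 (x i)))
        = (Pp j).sup' (hPne j) (fun pr => ∑ i, (if ξ i then (1:ℝ) else -1) * v pr i) :=
      fun ξ => Finset.sup'_congr (hPne j) rfl (fun pr _ => hfun ξ pr)
    have hv : ∀ pr ∈ Pp j, ∑ i, (v pr i)^2 ≤ R^2 := by
      intro pr hpr
      have hd := ((hPmem j pr).1 hpr).2
      have h1 : ∀ i : Fin m, (v pr i)^2 ≤ (3 * sc j / m)^2 := by
        intro i
        have h2 : |v pr i| ≤ 3 * sc j / m := by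
          show |(1 / (m : ℝ)) * (pr.1 (x i) - pr.2 (x i))| ≤ _
          rw [abs_mul, abs_of_nonneg (by positivity : (0:ℝ) ≤ 1/(m:ℝ))]
          calc (1/(m:ℝ)) * |pr.1 (x i) - pr.2 (x i)| ≤ (1/(m:ℝ)) * (3 * sc j) := by
                apply mul_le_mul_of_nonneg_left (hd (x i)) (by positivity)
            _ = 3 * sc j / m := by ring
        calc (v pr i)^2 = |v pr i|^2 := (sq_abs _).symm
          _ ≤ (3 * sc j / m)^2 := by
              apply pow_le_pow_left₀ (abs_nonneg _) h2
      calc ∑ i, (v pr i)^2 ≤ ∑ _i : Fin m, (3 * sc j / m)^2 :=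
            Finset.sum_le_sum (fun i _ => h1 i)
        _ = (m:ℝ) * (3 * sc j / m)^2 := by
            rw [Finset.sum_const, Finset.card_univ, Fintype.card_fin, nsmul_eq_mul]
        _ = R^2 := by
            have hx : R^2 = (3*sc j)^2/(m:ℝ) := by
              rw [hRdef, div_pow, hsqmsq]
            rw [hx]
            field_simp
    have hmas := massart (Pp j) (hPne j) v R hR hv
    have hstep : (2^m : ℝ)⁻¹ * ∑ ξ : Fin m → Bool, (Pp j).sup' (hPne j)
        (fun pr => (1 / (m : ℝ)) * ∑ i,
          (if ξ i then (1:ℝ) else -1) * (pr.1 (x i) - pr.2 (x i))) ≤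
        R * Real.sqrt (2 * Real.log ((Pp j).card)) := by
      refine le_trans (le_of_eq ?_) hmas
      congr 1
      exact Finset.sum_congr rfl (fun ξ _ => hsup_eq ξ)
    refine hstep.trans ?_
    have hlogcard : Real.log ((Pp j).card) ≤ 2 * Real.log (N j) := by
      have hc1 : (1:ℝ) ≤ ((Pp j).card : ℝ) := by exact_mod_cast (hPne j).card_pos
      have hc2 : ((Pp j).card : ℝ) ≤ ((N j : ℝ))^2 := by
        have := hPcard j (by omega)
        have h3 : ((Pp j).card : ℝ) ≤ ((N j * N j : ℕ) : ℝ) := by exact_mod_cast this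
        rw [Nat.cast_mul] at h3
        nlinarith
      calc Real.log ((Pp j).card) ≤ Real.log ((N j : ℝ)^2) :=
            Real.log_le_log (by linarith) hc2
        _ = 2 * Real.log (N j) := by
            rw [Real.log_pow]
            push_cast
            ring
    have hlogN : 0 ≤ Real.log (N j) := by
      apply Real.log_nonneg
      exact_mod_cast hN1 j
    have hsq2 : Real.sqrt (2 * Real.log ((Pp j).card)) ≤ 2 * Real.sqrt (Real.log (N j)) := by
      have h4 : (2:ℝ) * Real.log ((Pp j).card) ≤ 4 * Real.log (N j) := by linarith
      calc Real.sqrt (2 * Real.log ((Pp j).card)) ≤ Real.sqrt (4 * Real.log (N j)) :=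
            Real.sqrt_le_sqrt h4
        _ = 2 * Real.sqrt (Real.log (N j)) := by
            rw [show (4:ℝ) * Real.log (N j) = (2:ℝ)^2 * Real.log (N j) by norm_num]
            rw [Real.sqrt_mul (by positivity), Real.sqrt_sq (by norm_num)]
    calc R * Real.sqrt (2 * Real.log ((Pp j).card)) ≤ R * (2 * Real.sqrt (Real.log (N j))) :=
          mul_le_mul_of_nonneg_left hsq2 hR
      _ = 6 * sc j * Real.sqrt (Real.log (N j)) / Real.sqrt m := by
          rw [hRdef]
          ring
  have hreal : (2^m : ℝ)⁻¹ * ∑ ξ : Fin m → Bool,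
      sSup ((fun f : X → ℝ =>
        |(1 / (m : ℝ)) * ∑ i, (if ξ i then (1 : ℝ) else -1) * f (x i)|) '' F) ≤
      4*α + ∑ j ∈ Finset.range L, 6 * sc j * Real.sqrt (Real.log (N j)) / Real.sqrt m := by
    calc (2^m : ℝ)⁻¹ * ∑ ξ : Fin m → Bool,
        sSup ((fun f : X → ℝ =>
          |(1 / (m : ℝ)) * ∑ i, (if ξ i then (1 : ℝ) else -1) * f (x i)|) '' F)
        ≤ (2^m : ℝ)⁻¹ * ∑ ξ : Fin m → Bool,
          (4*α + ∑ j ∈ Finset.range L, (Pp j).sup' (hPne j)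
            (fun pr => (1 / (m : ℝ)) * ∑ i,
              (if ξ i then (1:ℝ) else -1) * (pr.1 (x i) - pr.2 (x i)))) := by
          apply mul_le_mul_of_nonneg_left _ (by positivity)
          exact Finset.sum_le_sum (fun ξ _ => hchain ξ)
      _ = 4*α + ∑ j ∈ Finset.range L, (2^m : ℝ)⁻¹ * ∑ ξ : Fin m → Bool,
          (Pp j).sup' (hPne j) (fun pr => (1 / (m : ℝ)) * ∑ i,
            (if ξ i then (1:ℝ) else -1) * (pr.1 (x i) - pr.2 (x i))) := by
          rw [Finset.sum_add_distrib, Finset.sum_const, Finset.card_univ, nsmul_eq_mul]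
          have hc : (Fintype.card (Fin m → Bool) : ℝ) = 2^m := by
            simp [Fintype.card_fun]
          rw [hc, mul_add, Finset.sum_comm, Finset.mul_sum]
          congr 1
          field_simp
      _ ≤ 4*α + ∑ j ∈ Finset.range L, 6 * sc j * Real.sqrt (Real.log (N j)) / Real.sqrt m := by
          apply add_le_add_right
          apply Finset.sum_le_sum
          intro j hj
          exact hmass j (Finset.mem_range.1 hj)
  set u : ℕ → ℝ := fun j => 2*α*2^j with hudef
  set ent : ℝ → ℝ≥0∞ := fun δ =>
    entropyOf (covN (fun f g : X → ℝ => ∀ z, |f z - g z| ≤ δ) F) with hentdef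
  have hu_succ : ∀ j, u (j+1) = sc j := by
    intro j
    show (2:ℝ)*α*2^(j+1) = 4*α*2^j
    rw [pow_succ]
    ring
  have humono : ∀ j, u j ≤ u (j+1) := by
    intro j
    rw [hu_succ j]
    show (2:ℝ)*α*2^j ≤ 4*α*2^j
    have : (0:ℝ) < 2^j := by positivity
    nlinarith
  have hu0 : u 0 = 2*α := by
    show (2:ℝ)*α*2^0 = 2*α
    simp
  have huL : u L ≤ M := by
    obtain ⟨K, hK⟩ : ∃ K, L = K + 1 := ⟨L - 1, by omega⟩
    rw [hK, hu_succ K]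
    exact (hnot K (by omega)).le
  have hu_mono' : ∀ j k, j ≤ k → u j ≤ u k := by
    intro j k hjk
    show (2:ℝ)*α*2^j ≤ 2*α*2^k
    have : (2:ℝ)^j ≤ 2^k := pow_le_pow_right₀ (by norm_num) hjk
    nlinarith
  have hudiff : ∀ j, u (j+1) - u j = sc j / 2 := by
    intro j
    rw [hu_succ j]
    show (4:ℝ)*α*2^j - 2*α*2^j = (4*α*2^j)/2
    ring
  have hptj : ∀ j, j < L → ∀ δ ∈ Set.Ioc (u j) (u (j+1)),
      ENNReal.ofReal (Real.sqrt (Real.log (N j))) ≤ ent δ := by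
    intro j hjL δ hδ
    have hδsc : δ ≤ sc j := by
      have := hδ.2
      rwa [hu_succ j] at this
    have hcov : covN (fun f g : X → ℝ => ∀ z, |f z - g z| ≤ sc j) F ≤
        covN (fun f g : X → ℝ => ∀ z, |f z - g z| ≤ δ) F := by
      apply covN_mono
      intro a b hab z
      exact (hab z).trans hδsc
    by_cases htop : covN (fun f g : X → ℝ => ∀ z, |f z - g z| ≤ δ) F = ⊤
    · have : ent δ = ⊤ := by
        rw [hentdef]
        simp only [htop, entropyOf, if_pos]
      rw [this]
      exact le_top
    · have hent : ent δ = ENNReal.ofReal (Real.sqrt (Real.log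
          ((covN (fun f g : X → ℝ => ∀ z, |f z - g z| ≤ δ) F).toNat))) := by
        rw [hentdef]
        simp only [entropyOf, if_neg htop]
      rw [hent]
      apply ENNReal.ofReal_le_ofReal
      apply Real.sqrt_le_sqrt
      apply Real.log_le_log
      · have := hN1 j
        exact_mod_cast Nat.pos_of_ne_zero (by omega)
      · have h1 : (N j : ℕ∞) ≤ covN (fun f g : X → ℝ => ∀ z, |f z - g z| ≤ δ) F := by
          rw [hT3 j hjL]
          exact hcov
        have h2 := ENat.toNat_le_toNat h1 htop
        rw [ENat.toNat_coe] at h2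
        exact_mod_cast h2
  have hconst : ∀ j, j < L →
      ENNReal.ofReal ((sc j / 2) * Real.sqrt (Real.log (N j))) ≤
        ∫⁻ δ in Set.Ioc (u j) (u (j+1)), ent δ := by
    intro j hjL
    have h1 : ∫⁻ _δ in Set.Ioc (u j) (u (j+1)),
        ENNReal.ofReal (Real.sqrt (Real.log (N j))) ≤
        ∫⁻ δ in Set.Ioc (u j) (u (j+1)), ent δ :=
      setLIntegral_mono' measurableSet_Ioc (hptj j hjL)
    rw [setLIntegral_const, Real.volume_Ioc, hudiff j] at h1
    refine le_trans (le_of_eq ?_) h1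
    rw [← ENNReal.ofReal_mul (by positivity)]
    rw [mul_comm]
  have hsplit : ∀ K : ℕ, ∑ j ∈ Finset.range K, (∫⁻ δ in Set.Ioc (u j) (u (j+1)), ent δ)
      = ∫⁻ δ in Set.Ioc (u 0) (u K), ent δ := by
    intro K
    induction K with
    | zero =>
      rw [Finset.range_zero, Finset.sum_empty, Set.Ioc_self, Measure.restrict_empty,
        lintegral_zero_measure]
    | succ n ih =>
      rw [Finset.sum_range_succ, ih]
      rw [← lintegral_union measurableSet_Ioc (Set.Ioc_disjoint_Ioc_of_le le_rfl)]
      rw [Set.Ioc_union_Ioc_eq_Ioc (hu_mono' 0 n (by omega)) (humono n)]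
  have hintle : ENNReal.ofReal (∑ j ∈ Finset.range L, (sc j / 2) * Real.sqrt (Real.log (N j)))
      ≤ ∫⁻ δ in Set.Ioc α M, ent δ := by
    rw [ENNReal.ofReal_sum_of_nonneg (fun j _ => by positivity)]
    calc ∑ j ∈ Finset.range L, ENNReal.ofReal ((sc j / 2) * Real.sqrt (Real.log (N j)))
        ≤ ∑ j ∈ Finset.range L, ∫⁻ δ in Set.Ioc (u j) (u (j+1)), ent δ :=
          Finset.sum_le_sum (fun j hj => hconst j (Finset.mem_range.1 hj))
      _ = ∫⁻ δ in Set.Ioc (u 0) (u L), ent δ := hsplit L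
      _ ≤ ∫⁻ δ in Set.Ioc α M, ent δ := by
          apply lintegral_mono_set
          apply Set.Ioc_subset_Ioc
          · rw [hu0]; linarith
          · exact huL
  have hreal2 : (2^m : ℝ)⁻¹ * ∑ ξ : Fin m → Bool,
      sSup ((fun f : X → ℝ =>
        |(1 / (m : ℝ)) * ∑ i, (if ξ i then (1 : ℝ) else -1) * f (x i)|) '' F) ≤
      4*α + (12 / Real.sqrt m) *
        ∑ j ∈ Finset.range L, (sc j / 2) * Real.sqrt (Real.log (N j)) := by
    refine hreal.trans (le_of_eq ?_)
    congr 1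
    rw [Finset.mul_sum]
    refine Finset.sum_congr rfl (fun j _ => ?_)
    have habc : ∀ a b c : ℝ, c ≠ 0 → 6*a*b/c = 12/c*((a/2)*b) := by
      intro a b c hc
      field_simp
      ring
    exact habc (sc j) (Real.sqrt (Real.log (N j))) (Real.sqrt m) hsqm.ne' 
  calc ENNReal.ofReal ((2^m : ℝ)⁻¹ * ∑ ξ : Fin m → Bool,
        sSup ((fun f : X → ℝ =>
          |(1 / (m : ℝ)) * ∑ i, (if ξ i then (1 : ℝ) else -1) * f (x i)|) '' F))
      ≤ ENNReal.ofReal (4*α + (12 / Real.sqrt m) *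
          ∑ j ∈ Finset.range L, (sc j / 2) * Real.sqrt (Real.log (N j))) :=
        ENNReal.ofReal_le_ofReal hreal2
    _ ≤ ENNReal.ofReal (4*α) + ENNReal.ofReal ((12 / Real.sqrt m) *
          ∑ j ∈ Finset.range L, (sc j / 2) * Real.sqrt (Real.log (N j))) :=
        ENNReal.ofReal_add_le
    _ = ENNReal.ofReal (4*α) + ENNReal.ofReal (12 / Real.sqrt m) *
          ENNReal.ofReal (∑ j ∈ Finset.range L, (sc j / 2) * Real.sqrt (Real.log (N j))) := by
        congr 1
        exact ENNReal.ofReal_mul (by positivity)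
    _ ≤ ENNReal.ofReal (4*α) + ENNReal.ofReal (12 / Real.sqrt m) *
          ∫⁻ δ in Set.Ioc α M, ent δ := by
        exact add_le_add_right (mul_le_mul_right hintle _) _


end
end

section
/- Let X = Σ × X₀ ⊂ ℝ^d, meaning a finite group Σ acts on X with fundamental domain X₀. Suppose for some δ > 0: (1) ‖σx − σ'x'‖₂ > 2δ for all x, x' ∈ X₀ and all σ ≠ σ' in Σ; and (2) ‖σx − σx'‖₂ ≥ ‖x − x'‖₂ for all x, x' ∈ X₀ and σ ∈ Σ. Then N(X₀, δ) / N(X, δ) ≤ 1/|Σ|, i.e., |Σ| · N(X₀, δ) ≤ N(X, δ). -/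
open Metric

noncomputable section

/-- **Lemma A.5 (Theorem 3 in Sokolić et al.).** If `X = Σ × X₀` and for some
`δ > 0` the separation assumptions hold, then `N(X₀, δ)/N(X, δ) ≤ 1/|Σ|`,
i.e. `|Σ| · N(X₀, δ) ≤ N(X, δ)`. -/
theorem covering_number_ratio_of_fundamental_domain
    {d : ℕ} (Xs : Set (EuclideanSpace ℝ (Fin d)))
    {G : Type*} [Group G] [Fintype G]
    (θ : G → ↥Xs → ↥Xs)
    (hbij : ∀ σ, Function.Bijective (θ σ))
    (hone : ∀ x, θ 1 x = x)
    (hmul : ∀ σ τ x, θ σ (θ τ x) = θ (σ * τ) x)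
    (X₀ : Set ↥Xs)
    (hfund : ∀ x : ↥Xs, ∃! x₀, x₀ ∈ X₀ ∧ ∃ σ, θ σ x₀ = x)
    (δ : ℝ) (hδ : 0 < δ)
    (hsep : ∀ x ∈ X₀, ∀ x' ∈ X₀, ∀ σ σ' : G, σ ≠ σ' → 2 * δ < dist (θ σ x) (θ σ' x'))
    (hexpand : ∀ x ∈ X₀, ∀ x' ∈ X₀, ∀ σ : G, dist x x' ≤ dist (θ σ x) (θ σ x')) :
    (Fintype.card G : ℕ∞) * covN (fun x y : ↥Xs => dist x y ≤ δ) X₀ ≤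
      covN (fun x y : ↥Xs => dist x y ≤ δ) Set.univ := by
  classical
  have hrep : ∀ x : ↥Xs, ∃ q : ↥Xs × G, q.1 ∈ X₀ ∧ θ q.2 q.1 = x := by
    intro x
    obtain ⟨x₀, ⟨hx₀, σ, hσ⟩, _⟩ := hfund x
    exact ⟨(x₀, σ), hx₀, hσ⟩
  choose q hq1 hq2 using hrep
  set r : ↥Xs → ↥Xs := fun x => (q x).1 with hr
  set g : ↥Xs → G := fun x => (q x).2 with hg
  refine le_sInf ?_
  rintro n ⟨T, hT, hcard, hcov⟩
  have key : ∀ σ : G, covN (fun x y : ↥Xs => dist x y ≤ δ) X₀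
      ≤ ((T.filter fun t => g t = σ).card : ℕ∞) := by
    intro σ
    have h1 : covN (fun x y : ↥Xs => dist x y ≤ δ) X₀
        ≤ (((T.filter fun t => g t = σ).image r).card : ℕ∞) := by
      refine sInf_le ⟨(T.filter fun t => g t = σ).image r, ?_, rfl, ?_⟩
      · intro y hy
        simp only [Finset.coe_image, Set.mem_image, Finset.mem_coe,
          Finset.mem_filter] at hy
        obtain ⟨t, _, rfl⟩ := hy
        exact hq1 t
      · intro x hx
        obtain ⟨t, htT, hdist⟩ := hcov (θ σ x) (Set.mem_univ _)
        have hgt : g t = σ := by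
          by_contra hne
          have h2 := hsep x hx (r t) (hq1 t) σ (g t) (Ne.symm hne)
          rw [hq2 t] at h2
          linarith
        refine ⟨r t, Finset.mem_image_of_mem r (Finset.mem_filter.mpr ⟨htT, hgt⟩), ?_⟩
        have h3 : θ σ (r t) = t := by rw [← hgt]; exact hq2 t
        calc dist x (r t) ≤ dist (θ σ x) (θ σ (r t)) := hexpand x hx (r t) (hq1 t) σ
          _ = dist (θ σ x) t := by rw [h3]
          _ ≤ δ := hdist
    refine h1.trans ?_
    exact_mod_cast Finset.card_image_le
  have hsum : (∑ σ : G, ((T.filter fun t => g t = σ).card : ℕ∞)) = (T.card : ℕ∞) := by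
    rw [← Nat.cast_sum]
    exact_mod_cast
      (Finset.card_eq_sum_card_fiberwise (fun x _ => Finset.mem_univ (g x))).symm
  calc (Fintype.card G : ℕ∞) * covN (fun x y : ↥Xs => dist x y ≤ δ) X₀
      = ∑ _σ : G, covN (fun x y : ↥Xs => dist x y ≤ δ) X₀ := by
        rw [Finset.sum_const, Finset.card_univ, nsmul_eq_mul]
    _ ≤ ∑ σ : G, ((T.filter fun t => g t = σ).card : ℕ∞) :=
        Finset.sum_le_sum fun σ _ => key σ
    _ = (T.card : ℕ∞) := hsum
    _ = n := hcard

end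
end

section
/- Let X ⊂ ℝ^d be bounded, α > 1, Γ = Lip_L(X), and let P, Q be probability measures on X (not necessarily group-invariant). Then D_{f_α}^{Γ}(P‖Q) = D_{f_α}^{F}(P‖Q), where F = { γ ∈ Lip_L(X) : ‖γ‖_∞ ≤ (α−1)^{-1} + L·diam(X) }, i.e., the supremum defining the (f_α, Γ)-divergence is unchanged when restricted to L-Lipschitz functions whose sup norm is at most (α−1)^{-1} + L·diam(X). -/
open MeasureTheory Metric

noncomputable section

/-- The set of `L`-Lipschitz real-valued functions (`Lip_L`). -/
def lipFuns {Ω : Type*} [PseudoMetricSpace Ω] (L : ℝ) : Set (Ω → ℝ) :=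
  {γ | ∀ x y, |γ x - γ y| ≤ L * dist x y}

/-- The Legendre transform of `f_α`:
`f_α*(y) = (α⁻¹ (α−1)^{α/(α−1)} y^{α/(α−1)} + 1/(α(α−1))) · 1_{y>0}`. -/
def fStar (α y : ℝ) : ℝ :=
  if 0 < y then α⁻¹ * (α - 1) ^ (α / (α - 1)) * y ^ (α / (α - 1)) + 1 / (α * (α - 1))
  else 0

/-- The `(f_α, A)`-divergence `D_{f_α}^{A}(P‖Q) = sup_{γ ∈ A} (E_P[γ] − E_Q[f_α*(γ)])`. -/
def DfDiv {Ω : Type*} [MeasurableSpace Ω] (α : ℝ) (A : Set (Ω → ℝ))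
    (P Q : Measure Ω) : ℝ :=
  sSup ((fun γ : Ω → ℝ => (∫ x, γ x ∂P) - ∫ x, fStar α (γ x) ∂Q) '' A)

lemma fStar_nonneg {α : ℝ} (hα : 1 < α) (y : ℝ) : 0 ≤ fStar α y := by
  unfold fStar
  split_ifs with hy
  · have h1 : (0:ℝ) < α - 1 := by linarith
    have h2 : (0:ℝ) < α := by linarith
    have h3 : 0 ≤ (α-1) ^ (α/(α-1)) := Real.rpow_nonneg h1.le _
    have h4 : 0 ≤ y ^ (α/(α-1)) := Real.rpow_nonneg hy.le _
    have h5 : 0 ≤ 1/(α*(α-1)) := by positivity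
    have h6 := mul_nonneg (mul_nonneg (inv_nonneg.2 h2.le) h3) h4
    linarith
  · exact le_refl _

lemma fStar_mono {α : ℝ} (hα : 1 < α) : Monotone (fStar α) := by
  intro y z hyz
  rcases le_or_gt y 0 with hy | hy
  · rw [show fStar α y = 0 from if_neg (not_lt.2 hy)]
    exact fStar_nonneg hα z
  · have hz : 0 < z := hy.trans_le hyz
    simp only [fStar, if_pos hy, if_pos hz]
    have h1 : (0:ℝ) < α - 1 := by linarith
    have hc : 0 ≤ α⁻¹ * (α-1)^(α/(α-1)) :=
      mul_nonneg (inv_nonneg.2 (by linarith)) (Real.rpow_nonneg h1.le _)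
    have h2 : y ^ (α/(α-1)) ≤ z ^ (α/(α-1)) :=
      Real.rpow_le_rpow hy.le hyz (div_nonneg (by linarith) (by linarith))
    have := mul_le_mul_of_nonneg_left h2 hc
    linarith

lemma pow_gap {p : ℝ} (hp : 1 ≤ p) {t u : ℝ} (ht : 1 ≤ t) (htu : t ≤ u) :
    p * (u - t) ≤ u ^ p - t ^ p := by
  have ht0 : (0:ℝ) < t := lt_of_lt_of_le one_pos ht
  set s : ℝ := (u - t)/t with hs
  have hs0 : 0 ≤ s := div_nonneg (by linarith) ht0.le
  have hb : 1 + p * s ≤ (1 + s) ^ p :=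
    one_add_mul_self_le_rpow_one_add (by linarith) hp
  have hts : t * (1 + s) = u := by rw [hs]; field_simp; ring
  have h1 : u ^ p = t ^ p * (1 + s) ^ p := by
    rw [← hts, Real.mul_rpow ht0.le (by linarith)]
  have h2 : t ^ p * (1 + p * s) ≤ u ^ p := by
    rw [h1]; exact mul_le_mul_of_nonneg_left hb (Real.rpow_nonneg ht0.le p)
  have h3 : t ^ p * s = t ^ (p - 1) * (u - t) := by
    rw [hs, Real.rpow_sub ht0, Real.rpow_one]; field_simp
  have h4 : 1 ≤ t ^ (p - 1) := Real.one_le_rpow ht (by linarith)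
  have h5 : u - t ≤ t ^ (p - 1) * (u - t) := le_mul_of_one_le_left (by linarith) h4
  have h7 : p * (u - t) ≤ p * (t ^ p * s) := by
    rw [h3]; exact mul_le_mul_of_nonneg_left h5 (by linarith)
  have e : t ^ p * (1 + p * s) = t ^ p + p * (t ^ p * s) := by ring
  linarith

lemma fStar_gap {α : ℝ} (hα : 1 < α) {z y : ℝ} (hz : (α-1)⁻¹ ≤ z) (hzy : z ≤ y) :
    y - z ≤ fStar α y - fStar α z := by
  have h1 : (0:ℝ) < α - 1 := by linarith
  have hz0 : 0 < z := lt_of_lt_of_le (inv_pos.2 h1) hz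
  have hy0 : 0 < y := hz0.trans_le hzy
  simp only [fStar, if_pos hz0, if_pos hy0]
  set p := α/(α-1) with hp
  have hp1 : 1 ≤ p := by rw [hp, le_div_iff₀ h1]; linarith
  have ht : 1 ≤ (α-1)*z := by
    have := mul_le_mul_of_nonneg_left hz h1.le
    rwa [mul_inv_cancel₀ h1.ne'] at this
  have htu : (α-1)*z ≤ (α-1)*y := mul_le_mul_of_nonneg_left hzy h1.le
  have key := pow_gap hp1 ht htu
  have e1 : ((α-1)*y)^p = (α-1)^p * y^p := Real.mul_rpow h1.le hy0.le
  have e2 : ((α-1)*z)^p = (α-1)^p * z^p := Real.mul_rpow h1.le hz0.le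
  have hα0 : (0:ℝ) < α := by linarith
  rw [e1, e2] at key
  have key2 := mul_le_mul_of_nonneg_left key (inv_nonneg.2 hα0.le)
  have e3 : α⁻¹ * (p * ((α-1)*y - (α-1)*z)) = y - z := by
    rw [hp]; field_simp
  have e4 : α⁻¹ * ((α-1)^p * y^p - (α-1)^p * z^p)
      = α⁻¹*(α-1)^p*y^p - α⁻¹*(α-1)^p*z^p := by ring
  linarith

lemma sub_le_fStar {α : ℝ} (hα : 1 < α) (y : ℝ) : y - (α-1)⁻¹ ≤ fStar α y := by
  rcases le_or_gt y ((α-1)⁻¹) with h | h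
  · have := fStar_nonneg hα y; linarith
  · have h1 := fStar_gap hα (le_refl (α-1)⁻¹) h.le
    have h2 := fStar_nonneg hα ((α-1)⁻¹); linarith

lemma measurable_fStar (α : ℝ) : Measurable (fStar α) := by
  unfold fStar
  apply Measurable.ite (measurableSet_Ioi (a := (0:ℝ)))
  · fun_prop
  · fun_prop

lemma integrable_fStar_comp {Ω : Type*} [MeasurableSpace Ω] (μ : Measure Ω) [IsFiniteMeasure μ]
    {α : ℝ} (hα : 1 < α) {g : Ω → ℝ} (hg : Measurable g) (B : ℝ) (hB : ∀ x, g x ≤ B) :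
    Integrable (fun x => fStar α (g x)) μ := by
  apply Integrable.mono' (integrable_const (fStar α B))
    ((measurable_fStar α).comp hg).aestronglyMeasurable
  refine ae_of_all _ fun x => ?_
  simp only [Function.comp_apply, Real.norm_eq_abs]
  rw [abs_of_nonneg (fStar_nonneg hα _)]
  exact fStar_mono hα (hB x)

lemma integrable_of_bounded {Ω : Type*} [MeasurableSpace Ω] (μ : Measure Ω) [IsFiniteMeasure μ]
    {f : Ω → ℝ} (hf : Measurable f) (C : ℝ) (h : ∀ x, |f x| ≤ C) : Integrable f μ := by
  apply Integrable.mono' (integrable_const C) hf.aestronglyMeasurable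
  exact ae_of_all _ fun x => by rw [Real.norm_eq_abs]; exact h x

/-- **Lemma A.8.** For `α > 1` and bounded `X ⊂ ℝ^d`, the Lipschitz-regularized
`α`-divergence is unchanged when the supremum is restricted to `L`-Lipschitz
functions with sup norm at most `(α−1)⁻¹ + L·diam(X)`:
`D_{f_α}^{Γ}(P‖Q) = D_{f_α}^{F}(P‖Q)`. -/
theorem falpha_divergence_restrict_to_bounded
    {d : ℕ} (Xs : Set (EuclideanSpace ℝ (Fin d))) (hXbdd : Bornology.IsBounded Xs)
    (α L : ℝ) (hα : 1 < α) (hL : 0 < L)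
    (P Q : Measure ↥Xs) [IsProbabilityMeasure P] [IsProbabilityMeasure Q] :
    DfDiv α (lipFuns L) P Q =
      DfDiv α {γ : ↥Xs → ℝ | γ ∈ lipFuns L ∧
        ∀ x, |γ x| ≤ (α - 1)⁻¹ + L * Metric.diam Xs} P Q := by
  classical
  haveI hne : Nonempty ↥Xs := by
    by_contra h
    have h0 : P Set.univ = 1 := measure_univ
    rw [Set.univ_eq_empty_iff.mpr (not_nonempty_iff.mp h)] at h0
    simp at h0
  have x₀ : ↥Xs := Classical.choice hne
  have h1 : (0:ℝ) < α - 1 := by linarith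
  have hβ0 : (0:ℝ) < (α-1)⁻¹ := inv_pos.2 h1
  have hD0 : 0 ≤ Metric.diam Xs := Metric.diam_nonneg
  have hLD : 0 ≤ L * Metric.diam Xs := mul_nonneg hL.le hD0
  simp only [DfDiv]
  set D := Metric.diam Xs with hDdef
  set obj : (↥Xs → ℝ) → ℝ :=
    fun γ => (∫ x, γ x ∂P) - ∫ x, fStar α (γ x) ∂Q with hobj
  set F : Set (↥Xs → ℝ) :=
    {γ : ↥Xs → ℝ | γ ∈ lipFuns L ∧ ∀ x, |γ x| ≤ (α - 1)⁻¹ + L * D} with hFdef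
  -- basic facts about Lipschitz functions
  have distD : ∀ x y : ↥Xs, dist x y ≤ D := fun x y => by
    rw [Subtype.dist_eq]; exact Metric.dist_le_diam_of_mem hXbdd x.2 y.2
  have hmeas : ∀ γ : ↥Xs → ℝ, γ ∈ lipFuns L → Measurable γ := by
    intro γ hγ
    have : LipschitzWith (Real.toNNReal L) γ := by
      apply LipschitzWith.of_dist_le_mul
      intro x y
      rw [Real.dist_eq, Real.coe_toNNReal L hL.le]
      exact hγ x y
    exact this.continuous.measurable
  have hgap : ∀ γ : ↥Xs → ℝ, γ ∈ lipFuns L → ∀ x y : ↥Xs, γ x - γ y ≤ L * D := by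
    intro γ hγ x y
    calc γ x - γ y ≤ |γ x - γ y| := le_abs_self _
      _ ≤ L * dist x y := hγ x y
      _ ≤ L * D := mul_le_mul_of_nonneg_left (distD x y) hL.le
  have hbound : ∀ γ : ↥Xs → ℝ, γ ∈ lipFuns L → ∀ x, |γ x| ≤ |γ x₀| + L * D := by
    intro γ hγ x
    have h1 := hgap γ hγ x x₀
    have h2 := hgap γ hγ x₀ x
    have h3 := le_abs_self (γ x₀)
    have h4 := neg_abs_le (γ x₀)
    rw [abs_le]; constructor <;> linarith
  have hintP : ∀ γ : ↥Xs → ℝ, γ ∈ lipFuns L → Integrable γ P := fun γ hγ =>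
    integrable_of_bounded P (hmeas γ hγ) _ (hbound γ hγ)
  have hintQ : ∀ γ : ↥Xs → ℝ, γ ∈ lipFuns L → Integrable γ Q := fun γ hγ =>
    integrable_of_bounded Q (hmeas γ hγ) _ (hbound γ hγ)
  have hintfQ : ∀ γ : ↥Xs → ℝ, γ ∈ lipFuns L → Integrable (fun x => fStar α (γ x)) Q := fun γ hγ =>
    integrable_fStar_comp Q hα (hmeas γ hγ) (|γ x₀| + L*D)
      (fun x => (le_abs_self _).trans (hbound γ hγ x))
  -- upper bound on obj over lipFuns
  have hub : ∀ γ : ↥Xs → ℝ, γ ∈ lipFuns L → obj γ ≤ L * D + (α-1)⁻¹ := by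
    intro γ hγ
    have hrange_bdd : BddAbove (Set.range γ) :=
      ⟨|γ x₀| + L*D, by rintro _ ⟨x, rfl⟩; exact (le_abs_self _).trans (hbound γ hγ x)⟩
    have hle : ∀ x, γ x ≤ ⨆ y, γ y := fun x => le_ciSup hrange_bdd x
    have hges : ∀ x, (⨆ y, γ y) - L*D ≤ γ x := by
      intro x
      have : (⨆ y, γ y) ≤ γ x + L*D := ciSup_le (fun y => by linarith [hgap γ hγ y x])
      linarith
    have hIP : ∫ x, γ x ∂P ≤ (⨆ y, γ y) := by
      have := integral_mono (hintP γ hγ) (integrable_const (⨆ y, γ y)) hle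
      simpa [measure_univ] using this
    have hIQ : (⨆ y, γ y) - L*D - (α-1)⁻¹ ≤ ∫ x, fStar α (γ x) ∂Q := by
      have hpt : ∀ x, (⨆ y, γ y) - L*D - (α-1)⁻¹ ≤ fStar α (γ x) := by
        intro x
        have ha := sub_le_fStar hα (γ x)
        have hb := hges x
        linarith
      have := integral_mono (integrable_const _) (hintfQ γ hγ) hpt
      simpa [measure_univ] using this
    simp only [hobj]
    linarith
  -- key replacement lemma
  have key : ∀ γ : ↥Xs → ℝ, γ ∈ lipFuns L → ∃ γ' ∈ F, obj γ ≤ obj γ' := by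
    intro γ hγ
    have hrange_bdd : BddAbove (Set.range γ) :=
      ⟨|γ x₀| + L*D, by rintro _ ⟨x, rfl⟩; exact (le_abs_self _).trans (hbound γ hγ x)⟩
    have hle : ∀ x, γ x ≤ ⨆ y, γ y := fun x => le_ciSup hrange_bdd x
    have hges : ∀ x, (⨆ y, γ y) - L*D ≤ γ x := by
      intro x
      have : (⨆ y, γ y) ≤ γ x + L*D := ciSup_le (fun y => by linarith [hgap γ hγ y x])
      linarith
    set sγ := ⨆ y, γ y with hsγ
    clear_value sγ
    -- the shift
    rcases lt_or_ge ((α-1)⁻¹ + L*D) sγ with hcase | hcase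
    · -- shift down by c = sγ - ((α-1)⁻¹ + L*D) > 0
      set c := sγ - ((α-1)⁻¹ + L*D) with hc
      clear_value c
      have hc0 : 0 < c := by simp only [hc]; linarith
      have hlip' : (fun x => γ x - c) ∈ lipFuns L := by
        intro x y
        have e : (γ x - c) - (γ y - c) = γ x - γ y := by ring
        simp only [e]
        exact hγ x y
      refine ⟨fun x => γ x - c, ⟨hlip', fun x => ?_⟩, ?_⟩
      · have hu : γ x - c ≤ (α-1)⁻¹ + L*D := by
          have := hle x; simp only [hc]; linarith
        have hl : (α-1)⁻¹ ≤ γ x - c := by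
          have := hges x; simp only [hc]; linarith
        rw [abs_le]; constructor <;> linarith
      · -- obj γ ≤ obj (γ - c)
        have eP : ∫ x, (γ x - c) ∂P = (∫ x, γ x ∂P) - c := by
          rw [integral_sub (hintP γ hγ) (integrable_const c), integral_const]
          simp [measure_univ]
        have hz : ∀ x, (α-1)⁻¹ ≤ γ x - c := by
          intro x; have := hges x; simp only [hc]; linarith
        have hpt : ∀ x, fStar α (γ x - c) ≤ fStar α (γ x) - c := by
          intro x
          have := fStar_gap hα (hz x) (by linarith : γ x - c ≤ γ x)
          linarith
        have eQ : ∫ x, fStar α (γ x - c) ∂Q ≤ (∫ x, fStar α (γ x) ∂Q) - c := by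
          have hint1 : Integrable (fun x => fStar α (γ x - c)) Q :=
            integrable_fStar_comp Q hα ((hmeas γ hγ).sub measurable_const)
              (|γ x₀| + L*D + |c|)
              (fun x => by
                have := (le_abs_self _).trans (hbound γ hγ x)
                have := neg_abs_le c
                linarith)
          have hint2 : Integrable (fun x => fStar α (γ x) - c) Q :=
            (hintfQ γ hγ).sub (integrable_const c)
          have := integral_mono hint1 hint2 hpt
          rw [integral_sub (hintfQ γ hγ) (integrable_const c), integral_const] at this
          simpa [measure_univ] using this
        simp only [hobj]
        rw [eP]
        linarith
    · rcases le_or_gt (-(α-1)⁻¹) sγ with hcase2 | hcase2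
      · -- no shift needed
        refine ⟨γ, ⟨hγ, fun x => ?_⟩, le_refl _⟩
        have hu := hle x
        have hl := hges x
        rw [abs_le]; constructor <;> linarith
      · -- shift up by -c where c = sγ + (α-1)⁻¹ < 0
        set c := sγ + (α-1)⁻¹ with hc
        clear_value c
        have hc0 : c < 0 := by simp only [hc]; linarith
        have hlip' : (fun x => γ x - c) ∈ lipFuns L := by
          intro x y
          have e : (γ x - c) - (γ y - c) = γ x - γ y := by ring
          simp only [e]
          exact hγ x y
        refine ⟨fun x => γ x - c, ⟨hlip', fun x => ?_⟩, ?_⟩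
        · have hu : γ x - c ≤ -(α-1)⁻¹ := by
            have := hle x; simp only [hc]; linarith
          have hl : -((α-1)⁻¹ + L*D) ≤ γ x - c := by
            have := hges x; simp only [hc]; linarith
          rw [abs_le]; constructor <;> linarith
        · have eP : ∫ x, (γ x - c) ∂P = (∫ x, γ x ∂P) - c := by
            rw [integral_sub (hintP γ hγ) (integrable_const c), integral_const]
            simp [measure_univ]
          have hzero : (fun x => fStar α (γ x - c)) = fun _ => (0:ℝ) := by
            funext x
            have h5 : γ x - c ≤ -(α-1)⁻¹ := by simp only [hc]; linarith [hle x]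
            have h6 : ¬ (0 < γ x - c) := by intro h7; linarith
            simp only [fStar]
            exact if_neg h6
          have eQ : ∫ x, fStar α (γ x - c) ∂Q = 0 := by
            rw [hzero]; simp
          have hQpos : 0 ≤ ∫ x, fStar α (γ x) ∂Q :=
            integral_nonneg (fun x => fStar_nonneg hα _)
          simp only [hobj]
          rw [eP, eQ]
          linarith
  -- assemble
  have hzlip : (fun _ : ↥Xs => (0:ℝ)) ∈ lipFuns L := by
    intro x y
    simp only [sub_self, abs_zero]
    exact mul_nonneg hL.le dist_nonneg
  have hzF : (fun _ : ↥Xs => (0:ℝ)) ∈ F := by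
    refine ⟨hzlip, fun x => ?_⟩
    simp only [abs_zero]
    linarith
  have hsub : obj '' F ⊆ obj '' lipFuns L :=
    Set.image_mono (fun γ hγ => hγ.1)
  have hbddS1 : BddAbove (obj '' lipFuns L) := by
    refine ⟨L * D + (α-1)⁻¹, ?_⟩
    rintro _ ⟨γ, hγ, rfl⟩
    exact hub γ hγ
  have hbddS2 : BddAbove (obj '' F) := hbddS1.mono hsub
  have hS2ne : (obj '' F).Nonempty := ⟨obj (fun _ => 0), ⟨fun _ => 0, hzF, rfl⟩⟩
  have hS1ne : (obj '' lipFuns L).Nonempty := ⟨obj (fun _ => 0), ⟨fun _ => 0, hzlip, rfl⟩⟩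
  apply le_antisymm
  · apply csSup_le hS1ne
    rintro _ ⟨γ, hγ, rfl⟩
    obtain ⟨γ', hγ', hle'⟩ := key γ hγ
    exact hle'.trans (le_csSup hbddS2 ⟨γ', hγ', rfl⟩)
  · exact csSup_le_csSup hbddS1 hS2ne hsub

end
end

section
/- Let H be a real Hilbert space, X a set with an action of a finite group Σ = {σ₁,…,σ_{|Σ|}} and fundamental domain X₀, and φ : X → H a feature map whose kernel k(x,y) := ⟨φ(x), φ(y)⟩ satisfies: k ≥ 0 and k(σx,σy) = k(x,y) for all σ; k(x,y) = K := max k if and only if x = y; and k(σx, x) ≤ cK for some c ∈ (0,1), all non-identity σ ∈ Σ and all x ∈ X₀. Let ξ₁,…,ξ_m be independent random variables taking values in {−1,1} with equal probability and x₁,…,x_m ∈ X. Then E_ξ sup_{f ∈ H, ‖f‖_H ≤ 1} | (1/(m|Σ|)) Σ_{i=1}^m ξ_i Σ_{j=1}^{|Σ|} ⟨f, φ(σ_j x_i)⟩ | ≤ (1 + c(|Σ|−1))^{1/2} K^{1/2} / √(|Σ| m). -/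
open scoped RealInnerProductSpace

noncomputable section

lemma sSup_abs_inner_unitBall' {H : Type*} [NormedAddCommGroup H] [InnerProductSpace ℝ H]
    (v : H) : sSup ((fun f : H => |⟪f, v⟫|) '' {f : H | ‖f‖ ≤ 1}) = ‖v‖ := by
  apply IsGreatest.csSup_eq
  constructor
  · by_cases hv : v = 0
    · exact ⟨0, by simp, by simp [hv]⟩
    · have hvn : ‖v‖ ≠ 0 := norm_ne_zero_iff.2 hv
      refine ⟨‖v‖⁻¹ • v, ?_, ?_⟩
      · simp only [Set.mem_setOf_eq, norm_smul, norm_inv, norm_norm]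
        rw [inv_mul_cancel₀ hvn]
      · simp only []
        rw [real_inner_smul_left, real_inner_self_eq_norm_sq, abs_of_nonneg (by positivity)]
        field_simp
  · rintro y ⟨f, hf, rfl⟩
    calc |⟪f, v⟫| ≤ ‖f‖ * ‖v‖ := abs_real_inner_le_norm f v
    _ ≤ 1 * ‖v‖ := mul_le_mul_of_nonneg_right hf (norm_nonneg v)
    _ = ‖v‖ := one_mul _

lemma rad_orth' {m : ℕ} (i j : Fin m) (hij : i ≠ j) :
    ∑ ξ : Fin m → Bool, (if ξ i then (1:ℝ) else -1) * (if ξ j then (1:ℝ) else -1) = 0 := by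
  classical
  apply Finset.sum_ninvolution (fun ξ => Function.update ξ i (!ξ i))
  · intro ξ
    have h1 : Function.update ξ i (!ξ i) i = !ξ i := Function.update_self _ _ _
    have h2 : Function.update ξ i (!ξ i) j = ξ j := Function.update_of_ne hij.symm _ _
    rw [h1, h2]
    cases hb : ξ i <;> cases ξ j <;> norm_num
  · intro ξ _ h
    have := congrFun h i
    simp at this
  · intro ξ; exact Finset.mem_univ _
  · intro ξ
    funext k
    by_cases hk : k = i
    · subst hk; simp
    · simp [Function.update_of_ne hk]

/-- **Lemma A.9 (Rademacher average of the RKHS unit-ball class under group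
symmetrization).** With kernel `k(x,y) = ⟨φ(x), φ(y)⟩` satisfying the decay
assumption on the fundamental domain,
`E_ξ sup_{‖f‖ ≤ 1} |(1/(m|Σ|)) ∑_i ξ_i ∑_j ⟨f, φ(σ_j x_i)⟩|
≤ (1 + c(|Σ|−1))^{1/2} K^{1/2} / √(|Σ| m)`. -/
theorem rademacher_average_rkhs_group_invariant
    {X : Type*} {H : Type*} [NormedAddCommGroup H] [InnerProductSpace ℝ H]
    {G : Type*} [Group G] [Fintype G]
    (θ : G → X → X)
    (hbij : ∀ σ, Function.Bijective (θ σ))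
    (hone : ∀ x, θ 1 x = x)
    (hmul : ∀ σ τ x, θ σ (θ τ x) = θ (σ * τ) x)
    (X₀ : Set X)
    (hfund : ∀ x : X, ∃! x₀, x₀ ∈ X₀ ∧ ∃ σ, θ σ x₀ = x)
    (φ : X → H)
    (hknonneg : ∀ x y : X, 0 ≤ ⟪φ x, φ y⟫)
    (hkinv : ∀ (σ : G) (x y : X), ⟪φ (θ σ x), φ (θ σ y)⟫ = ⟪φ x, φ y⟫)
    (K : ℝ)
    (hKub : ∀ x y : X, ⟪φ x, φ y⟫ ≤ K)
    (hKiff : ∀ x y : X, ⟪φ x, φ y⟫ = K ↔ x = y)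
    (c : ℝ) (hc : c ∈ Set.Ioo (0 : ℝ) 1)
    (hdecay : ∀ σ : G, σ ≠ 1 → ∀ x ∈ X₀, ⟪φ (θ σ x), φ x⟫ ≤ c * K)
    (m : ℕ) (x : Fin m → X) :
    (2 ^ m : ℝ)⁻¹ * ∑ ξ : Fin m → Bool,
        sSup ((fun f : H =>
          |(1 / ((m : ℝ) * (Fintype.card G : ℝ))) *
            ∑ i, (if ξ i then (1 : ℝ) else -1) * ∑ σ : G, ⟪f, φ (θ σ (x i))⟫|) ''
          {f : H | ‖f‖ ≤ 1}) ≤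
      Real.sqrt (1 + c * ((Fintype.card G : ℝ) - 1)) * Real.sqrt K /
        Real.sqrt ((Fintype.card G : ℝ) * m) := by
  classical
  obtain ⟨hc0, hc1⟩ := hc
  have hRHS0 : 0 ≤ Real.sqrt (1 + c * ((Fintype.card G : ℝ) - 1)) * Real.sqrt K /
      Real.sqrt ((Fintype.card G : ℝ) * m) := by positivity
  rcases Nat.eq_zero_or_pos m with hm | hm
  · subst hm
    have hz : ∀ ξ : Fin 0 → Bool, sSup ((fun f : H =>
          |(1 / ((0 : ℕ) * (Fintype.card G : ℝ))) *
            ∑ i : Fin 0, (if ξ i then (1 : ℝ) else -1) * ∑ σ : G, ⟪f, φ (θ σ (x i))⟫|) ''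
          {f : H | ‖f‖ ≤ 1}) = 0 := by
      intro ξ
      have himg : ((fun f : H =>
          |(1 / ((0 : ℕ) * (Fintype.card G : ℝ))) *
            ∑ i : Fin 0, (if ξ i then (1 : ℝ) else -1) * ∑ σ : G, ⟪f, φ (θ σ (x i))⟫|) ''
          {f : H | ‖f‖ ≤ 1}) = {0} := by
        rw [show (fun f : H =>
          |(1 / ((0 : ℕ) * (Fintype.card G : ℝ))) *
            ∑ i : Fin 0, (if ξ i then (1 : ℝ) else -1) * ∑ σ : G, ⟪f, φ (θ σ (x i))⟫|)
           = fun _ : H => (0:ℝ) from funext fun f => by simp]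
        exact Set.Nonempty.image_const ⟨0, by simp⟩ 0
      rw [himg, csSup_singleton]
    calc (2 ^ (0:ℕ) : ℝ)⁻¹ * ∑ ξ : Fin 0 → Bool, sSup ((fun f : H =>
          |(1 / ((0 : ℕ) * (Fintype.card G : ℝ))) *
            ∑ i : Fin 0, (if ξ i then (1 : ℝ) else -1) * ∑ σ : G, ⟪f, φ (θ σ (x i))⟫|) ''
          {f : H | ‖f‖ ≤ 1}) = 0 := by
          rw [Finset.sum_congr rfl fun ξ _ => hz ξ]; simp
      _ ≤ _ := hRHS0
  -- main case m > 0
  set n : ℕ := Fintype.card G with hn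
  have hnpos : 0 < n := Fintype.card_pos
  have hK0 : 0 ≤ K := le_trans (hknonneg (x ⟨0, hm⟩) (x ⟨0, hm⟩)) (hKub _ _)
  have hA0 : 0 ≤ 1 + c * ((n:ℝ) - 1) := by
    have h1n : (1:ℝ) ≤ (n:ℝ) := by exact_mod_cast hnpos
    nlinarith
  have hm' : ((m:ℝ)) ≠ 0 := Nat.cast_ne_zero.2 hm.ne'
  have hn' : ((n:ℝ)) ≠ 0 := Nat.cast_ne_zero.2 hnpos.ne'
  set r : Bool → ℝ := fun b => if b then 1 else -1 with hr
  set w : Fin m → H := fun i => ∑ σ : G, φ (θ σ (x i)) with hw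
  set c₀ : ℝ := 1 / ((m:ℝ) * (n:ℝ)) with hc₀
  set v : (Fin m → Bool) → H := fun ξ => c₀ • ∑ i, r (ξ i) • w i with hv
  -- step 1 : the sSup equals ‖v ξ‖
  have hsup : ∀ ξ : Fin m → Bool, sSup ((fun f : H =>
          |(1 / ((m : ℝ) * (n : ℝ))) *
            ∑ i, (if ξ i then (1 : ℝ) else -1) * ∑ σ : G, ⟪f, φ (θ σ (x i))⟫|) ''
          {f : H | ‖f‖ ≤ 1}) = ‖v ξ‖ := by
    intro ξ
    have hfun : (fun f : H =>
          |(1 / ((m : ℝ) * (n : ℝ))) *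
            ∑ i, (if ξ i then (1 : ℝ) else -1) * ∑ σ : G, ⟪f, φ (θ σ (x i))⟫|)
        = fun f : H => |⟪f, v ξ⟫| := by
      funext f
      congr 1
      rw [hv]
      simp only [real_inner_smul_right, inner_sum, hw, hr, hc₀]
    rw [hfun, sSup_abs_inner_unitBall']
  -- kernel bound on one orbit sum
  have hsum1 : ∀ y : X, ∑ σ : G, ⟪φ (θ σ y), φ y⟫ ≤ (1 + c * ((n:ℝ) - 1)) * K := by
    intro y
    obtain ⟨x₀, ⟨hx₀X, σ₀, hσ₀⟩, -⟩ := hfund y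
    have hterm : ∀ σ : G, ⟪φ (θ σ y), φ y⟫ ≤ if σ = 1 then K else c * K := by
      intro σ
      have key : ⟪φ (θ σ y), φ y⟫ = ⟪φ (θ (σ₀⁻¹ * σ * σ₀) x₀), φ x₀⟫ := by
        rw [← hσ₀, hmul]
        have h1 : θ (σ * σ₀) x₀ = θ σ₀ (θ (σ₀⁻¹ * σ * σ₀) x₀) := by
          rw [hmul]; congr 1; group
        rw [h1, hkinv]
      by_cases hσ : σ = 1
      · rw [if_pos hσ]; exact hKub _ _
      · rw [if_neg hσ, key]
        refine hdecay _ ?_ x₀ hx₀X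
        intro h
        apply hσ
        have h2 : σ = σ₀ * (σ₀⁻¹ * σ * σ₀) * σ₀⁻¹ := by group
        rw [h2, h]
        group
    calc ∑ σ : G, ⟪φ (θ σ y), φ y⟫ ≤ ∑ σ : G, if σ = 1 then K else c * K :=
          Finset.sum_le_sum fun σ _ => hterm σ
      _ = (1 + c * ((n:ℝ) - 1)) * K := by
          rw [Finset.sum_ite, Finset.filter_eq' Finset.univ (1:G), if_pos (Finset.mem_univ _),
            Finset.sum_singleton, Finset.sum_const]
          have hcard : (Finset.univ.filter fun σ : G => ¬ σ = 1).card = n - 1 := by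
            have he : (Finset.univ.filter fun σ : G => ¬ σ = 1) = Finset.univ.erase 1 := by
              ext σ; simp [Finset.mem_erase, and_comm]
            rw [he, Finset.card_erase_of_mem (Finset.mem_univ _), Finset.card_univ]
          rw [hcard, nsmul_eq_mul, Nat.cast_sub hnpos]
          push_cast
          ring
  -- per-index bound
  have hwi : ∀ i : Fin m, ⟪w i, w i⟫ ≤ (n:ℝ) * ((1 + c * ((n:ℝ) - 1)) * K) := by
    intro i
    have hexp : ⟪w i, w i⟫ = ∑ τ : G, ∑ σ : G, ⟪φ (θ σ (x i)), φ (θ τ (x i))⟫ := by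
      rw [hw]
      simp only [sum_inner, inner_sum]
    rw [hexp]
    calc ∑ τ : G, ∑ σ : G, ⟪φ (θ σ (x i)), φ (θ τ (x i))⟫
        ≤ ∑ _τ : G, (1 + c * ((n:ℝ) - 1)) * K := by
          apply Finset.sum_le_sum
          intro τ _
          have hre : ∑ σ : G, ⟪φ (θ σ (θ τ (x i))), φ (θ τ (x i))⟫
              = ∑ σ : G, ⟪φ (θ σ (x i)), φ (θ τ (x i))⟫ := by
            rw [show (fun σ : G => ⟪φ (θ σ (θ τ (x i))), φ (θ τ (x i))⟫)
                = fun σ : G => ⟪φ (θ (σ * τ) (x i)), φ (θ τ (x i))⟫ from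
                funext fun σ => by rw [hmul]]
            exact Equiv.sum_comp (Equiv.mulRight τ)
              fun σ => ⟪φ (θ σ (x i)), φ (θ τ (x i))⟫
          rw [← hre]
          exact hsum1 (θ τ (x i))
      _ = (n:ℝ) * ((1 + c * ((n:ℝ) - 1)) * K) := by
          rw [Finset.sum_const, Finset.card_univ, nsmul_eq_mul, hn]
  -- orthogonality
  have horth : ∀ i j : Fin m, (∑ ξ : Fin m → Bool, r (ξ i) * r (ξ j))
      = if i = j then (2:ℝ)^m else 0 := by
    intro i j
    by_cases hij : i = j
    · subst hij
      rw [if_pos rfl]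
      have hone' : ∀ ξ : Fin m → Bool, r (ξ i) * r (ξ i) = 1 := by
        intro ξ; rw [hr]; cases ξ i <;> norm_num
      rw [Finset.sum_congr rfl fun ξ _ => hone' ξ, Finset.sum_const, Finset.card_univ,
        nsmul_eq_mul, mul_one]
      simp
    · rw [if_neg hij]
      exact rad_orth' i j hij
  -- second moment
  have hvsq : ∀ ξ : Fin m → Bool,
      ‖v ξ‖^2 = c₀^2 * ∑ i, ∑ j, (r (ξ i) * r (ξ j)) * ⟪w i, w j⟫ := by
    intro ξ
    rw [← real_inner_self_eq_norm_sq, hv]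
    simp only [real_inner_smul_left, real_inner_smul_right, sum_inner, inner_sum,
      Finset.mul_sum]
    apply Finset.sum_congr rfl; intro i _
    apply Finset.sum_congr rfl; intro j _
    rw [real_inner_comm (w j) (w i)]
    ring
  have hsum2 : (2^m:ℝ)⁻¹ * ∑ ξ : Fin m → Bool, ‖v ξ‖^2 = c₀^2 * ∑ i, ⟪w i, w i⟫ := by
    have h1 : ∑ ξ : Fin m → Bool, ‖v ξ‖^2
        = c₀^2 * ∑ i, ∑ j, (∑ ξ : Fin m → Bool, r (ξ i) * r (ξ j)) * ⟪w i, w j⟫ := by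
      rw [Finset.sum_congr rfl fun ξ _ => hvsq ξ, ← Finset.mul_sum]
      congr 1
      rw [Finset.sum_comm]
      apply Finset.sum_congr rfl; intro i _
      rw [Finset.sum_comm]
      apply Finset.sum_congr rfl; intro j _
      exact (Finset.sum_mul _ _ _).symm
    have h2 : ∑ i, ∑ j, (∑ ξ : Fin m → Bool, r (ξ i) * r (ξ j)) * ⟪w i, w j⟫
        = (2:ℝ)^m * ∑ i, ⟪w i, w i⟫ := by
      rw [Finset.mul_sum]
      apply Finset.sum_congr rfl; intro i _
      rw [Finset.sum_congr rfl fun j _ => by rw [horth i j]]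
      simp [Finset.sum_ite_eq, ite_mul]
    rw [h1, h2]
    have h2m : ((2:ℝ)^m) ≠ 0 := by positivity
    field_simp
  -- put it together
  have hcs : (∑ ξ : Fin m → Bool, ‖v ξ‖)^2 ≤ (2:ℝ)^m * ∑ ξ : Fin m → Bool, ‖v ξ‖^2 := by
    have hh := sq_sum_le_card_mul_sum_sq (s := (Finset.univ : Finset (Fin m → Bool)))
      (f := fun ξ => ‖v ξ‖)
    simpa [Finset.card_univ] using hh
  have hS0 : 0 ≤ (2^m:ℝ)⁻¹ * ∑ ξ : Fin m → Bool, ‖v ξ‖ := by positivity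
  have hSsq : ((2^m:ℝ)⁻¹ * ∑ ξ : Fin m → Bool, ‖v ξ‖)^2
      ≤ (1 + c * ((n:ℝ) - 1)) * K / ((n:ℝ) * m) := by
    have h2m : ((2:ℝ)^m) ≠ 0 := by positivity
    have step1 : ((2^m:ℝ)⁻¹ * ∑ ξ : Fin m → Bool, ‖v ξ‖)^2
        ≤ (2^m:ℝ)⁻¹ * ∑ ξ : Fin m → Bool, ‖v ξ‖^2 := by
      have e1 : ((2^m:ℝ)⁻¹ * ∑ ξ : Fin m → Bool, ‖v ξ‖)^2
          = (2^m:ℝ)⁻¹ * (2^m:ℝ)⁻¹ * (∑ ξ : Fin m → Bool, ‖v ξ‖)^2 := by ring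
      rw [e1]
      calc (2^m:ℝ)⁻¹ * (2^m:ℝ)⁻¹ * (∑ ξ : Fin m → Bool, ‖v ξ‖)^2
          ≤ (2^m:ℝ)⁻¹ * (2^m:ℝ)⁻¹ * ((2:ℝ)^m * ∑ ξ : Fin m → Bool, ‖v ξ‖^2) := by
            apply mul_le_mul_of_nonneg_left hcs (by positivity)
        _ = (2^m:ℝ)⁻¹ * ∑ ξ : Fin m → Bool, ‖v ξ‖^2 := by
            field_simp
    have step2 : (2^m:ℝ)⁻¹ * ∑ ξ : Fin m → Bool, ‖v ξ‖^2
        ≤ (1 + c * ((n:ℝ) - 1)) * K / ((n:ℝ) * m) := by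
      rw [hsum2]
      have hsw : ∑ i, ⟪w i, w i⟫ ≤ (m:ℝ) * ((n:ℝ) * ((1 + c * ((n:ℝ) - 1)) * K)) := by
        calc ∑ i, ⟪w i, w i⟫ ≤ ∑ _i : Fin m, (n:ℝ) * ((1 + c * ((n:ℝ) - 1)) * K) :=
              Finset.sum_le_sum fun i _ => hwi i
          _ = (m:ℝ) * ((n:ℝ) * ((1 + c * ((n:ℝ) - 1)) * K)) := by
              rw [Finset.sum_const, Finset.card_univ, Fintype.card_fin, nsmul_eq_mul]
      calc c₀^2 * ∑ i, ⟪w i, w i⟫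
          ≤ c₀^2 * ((m:ℝ) * ((n:ℝ) * ((1 + c * ((n:ℝ) - 1)) * K))) :=
            mul_le_mul_of_nonneg_left hsw (by positivity)
        _ = (1 + c * ((n:ℝ) - 1)) * K / ((n:ℝ) * m) := by
            rw [hc₀]; field_simp
    exact step1.trans step2
  have hfin : (2^m:ℝ)⁻¹ * ∑ ξ : Fin m → Bool, ‖v ξ‖
      ≤ Real.sqrt ((1 + c * ((n:ℝ) - 1)) * K / ((n:ℝ) * m)) := by
    rw [Real.le_sqrt hS0 (by positivity)]
    exact hSsq
  calc (2 ^ m : ℝ)⁻¹ * ∑ ξ : Fin m → Bool,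
        sSup ((fun f : H =>
          |(1 / ((m : ℝ) * (n : ℝ))) *
            ∑ i, (if ξ i then (1 : ℝ) else -1) * ∑ σ : G, ⟪f, φ (θ σ (x i))⟫|) ''
          {f : H | ‖f‖ ≤ 1})
      = (2^m:ℝ)⁻¹ * ∑ ξ : Fin m → Bool, ‖v ξ‖ := by
        rw [Finset.sum_congr rfl fun ξ _ => hsup ξ]
    _ ≤ Real.sqrt ((1 + c * ((n:ℝ) - 1)) * K / ((n:ℝ) * m)) := hfin
    _ = Real.sqrt (1 + c * ((n:ℝ) - 1)) * Real.sqrt K / Real.sqrt ((n:ℝ) * m) := by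
        rw [Real.sqrt_div (by positivity), Real.sqrt_mul hA0]

end
end
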